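/- Theorem 4(i) (Top-K α-re-identifiability): Let m ≥ 1 (m = α·n₁, the number of overlapping anonymized users), n₂ ≥ 2 and 1 ≤ K < n₂ be integers. For each u ∈ {1, …, m} let X_u have values in [θl, θu] with mean λ, and let {Y_{u,v}}_{v ∈ V_u} be a family of size n₂ − 1 with values in [θ̄l, θ̄u] and mean λ̄. If λ < λ̄, then P(for every u, #{v ∈ V_u : Y_{u,v} ≤ X_u} ≤ K − 1) ≥ 1 − exp(ln(2·α·n₁·(n₂ − K)) − (λ − λ̄)²/(4δ²)) = 1 − 2·m·(n₂ − K)·exp(−(λ − λ̄)²/(4δ²)); on this event every overlapping user's true mapping lies in its Top-K candidate set, i.e., Δ₁ is Top-K α-re-identifiable. Symmetrically, if λ > λ̄, the same lower bound holds for P(for every u, #{v ∈ V_u : Y_{u,v} ≥ X_u} ≤ K − 1). -/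

import Mathlib

open MeasureTheory ProbabilityTheory Real

/-!
No independence is assumed, so everything rests on the union bound. For one pair, `Y - X` takes
values in an interval of length `θ + θ̄ ≤ 2δ`, so Hoeffding's lemma and the Chernoff bound give
`P(Y ≤ X) ≤ exp(-(λ - λ̄)² / (2δ²))` when `λ < λ̄`. For each user fix `n₂ - K` of its `n₂ - 1`
wrong candidates: if none of them is at least as close as the true mapping, at most `K - 1`
candidates are, so a union bound over `m (n₂ - K)` pairs concludes.
-/

lemma Set.ncard_le_card_sub_of_forall_notMem {α : Type*} [Fintype α] {T : Set α} (S : Finset α)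
    (hS : ∀ v ∈ S, v ∉ T) : T.ncard ≤ Fintype.card α - S.card := by
  classical
  calc T.ncard ≤ (Sᶜ : Finset α).card := by
        rw [← Set.ncard_coe_finset]
        exact Set.ncard_le_ncard (fun v hv => by simpa using fun h => hS v h hv)
    _ = _ := Finset.card_compl S

section UnionBound

variable {Ω : Type*} [MeasurableSpace Ω] (μ : Measure Ω) [IsProbabilityMeasure μ]

lemma one_sub_card_mul_le_measureReal_iInter_compl {ι : Type*} [Fintype ι] (B : ι → Set Ω)
    {E : ℝ} (hB : ∀ i, μ.real (B i) ≤ E) :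
    1 - Fintype.card ι * E ≤ μ.real (⋂ i, (B i)ᶜ) := by
  have hcover : 1 ≤ μ.real (⋃ i, B i) + μ.real (⋂ i, (B i)ᶜ) := by
    rw [← probReal_univ (μ := μ), ← Set.union_compl_self (⋃ i, B i), Set.compl_iUnion]
    exact measureReal_union_le _ _
  have hunion : μ.real (⋃ i, B i) ≤ Fintype.card ι * E :=
    calc μ.real (⋃ i, B i) ≤ ∑ i, μ.real (B i) := measureReal_iUnion_fintype_le B
      _ ≤ ∑ _ : ι, E := Finset.sum_le_sum fun i _ => hB i
      _ = Fintype.card ι * E := by simp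
  linarith

lemma one_sub_card_mul_le_measureReal_forall_ncard_le {ι : Type*} [Fintype ι]
    {V : ι → Type*} [∀ i, Fintype (V i)] {N : ℕ} (hV : ∀ i, Fintype.card (V i) = N) (k : ℕ)
    (A : ∀ i, V i → Set Ω) {E : ℝ} (hA : ∀ i v, μ.real (A i v) ≤ E) :
    1 - Fintype.card ι * ((N - k : ℕ) : ℝ) * E ≤
      μ.real {ω | ∀ i, {v | ω ∈ A i v}.ncard ≤ k} := by
  classical
  choose S _ hS using fun i =>
    Finset.exists_subset_card_eq (s := (Finset.univ : Finset (V i))) (n := N - k) (by simp [hV i])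
  have hsub : (⋂ j : Σ i, S i, (A j.1 j.2)ᶜ) ⊆ {ω | ∀ i, {v | ω ∈ A i v}.ncard ≤ k} := by
    intro ω hω i
    have := Set.ncard_le_card_sub_of_forall_notMem (T := {v | ω ∈ A i v}) (S i)
      fun v hv => Set.mem_iInter.1 hω ⟨i, v, hv⟩
    rw [hV i, hS i] at this
    omega
  have hcard : (Fintype.card (Σ i, S i) : ℝ) = Fintype.card ι * ((N - k : ℕ) : ℝ) := by
    simp [hS]
  calc _ = 1 - Fintype.card (Σ i, S i) * E := by rw [hcard]
    _ ≤ μ.real (⋂ j : Σ i, S i, (A j.1 j.2)ᶜ) :=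
        one_sub_card_mul_le_measureReal_iInter_compl μ _ fun j => hA j.1 j.2
    _ ≤ _ := measureReal_mono hsub

end UnionBound

section Hoeffding

variable {Ω : Type*} [MeasurableSpace Ω] {μ : Measure Ω} [IsProbabilityMeasure μ]
  {X Y : Ω → ℝ} {a b c d : ℝ}

lemma measureReal_le_le_exp_of_mem_Icc (hX : AEMeasurable X μ) (hY : AEMeasurable Y μ)
    (hXab : ∀ᵐ ω ∂μ, X ω ∈ Set.Icc a b) (hYcd : ∀ᵐ ω ∂μ, Y ω ∈ Set.Icc c d)
    (h_le : μ[Y] ≤ μ[X]) :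
    μ.real {ω | X ω ≤ Y ω} ≤ exp (-2 * (μ[X] - μ[Y]) ^ 2 / ((b - a) + (d - c)) ^ 2) := by
  have hXi := Integrable.of_mem_Icc a b hX hXab
  have hYi := Integrable.of_mem_Icc c d hY hYcd
  have hmean : μ[fun ω => Y ω - X ω] = μ[Y] - μ[X] := integral_sub hYi hXi
  have hsub := hasSubgaussianMGF_of_mem_Icc (X := fun ω => Y ω - X ω) (hY.sub hX)
      (a := c - b) (b := d - a) <| by
    filter_upwards [hXab, hYcd] with ω ⟨hXa, hXb⟩ ⟨hYc, hYd⟩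
    exact ⟨by linarith, by linarith⟩
  calc μ.real {ω | X ω ≤ Y ω}
      = μ.real {ω | μ[X] - μ[Y] ≤ (Y ω - X ω) - μ[fun ω => Y ω - X ω]} := by
        congr with ω
        rw [hmean]
        constructor <;> intro h <;> linarith
    _ ≤ _ := hsub.measure_ge_le (sub_nonneg.2 h_le)
    _ = _ := by
        simp only [NNReal.coe_pow, NNReal.coe_div, coe_nnnorm, Real.norm_eq_abs,
          NNReal.coe_ofNat, div_pow, sq_abs]
        rw [show 2 * ((d - a - (c - b)) ^ 2 / 2 ^ 2) = ((b - a) + (d - c)) ^ 2 / 2 by ring,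
          div_div_eq_mul_div]
        ring_nf

lemma measureReal_le_le_exp_of_mem_Icc_of_le {δ : ℝ} (hX : AEMeasurable X μ)
    (hY : AEMeasurable Y μ) (hXab : ∀ᵐ ω ∂μ, X ω ∈ Set.Icc a b)
    (hYcd : ∀ᵐ ω ∂μ, Y ω ∈ Set.Icc c d) (hab : 0 < b - a) (hcd : 0 < d - c)
    (hab_le : b - a ≤ δ) (hcd_le : d - c ≤ δ) (h_le : μ[Y] ≤ μ[X]) :
    μ.real {ω | X ω ≤ Y ω} ≤ exp (-(μ[X] - μ[Y]) ^ 2 / (4 * δ ^ 2)) := by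
  refine (measureReal_le_le_exp_of_mem_Icc hX hY hXab hYcd h_le).trans (exp_le_exp.2 ?_)
  have hw : ((b - a) + (d - c)) ^ 2 ≤ 4 * δ ^ 2 := by nlinarith
  have hx := sq_nonneg (μ[X] - μ[Y])
  rw [neg_mul, neg_div, neg_div, neg_le_neg_iff]
  calc (μ[X] - μ[Y]) ^ 2 / (4 * δ ^ 2) ≤ 2 * (μ[X] - μ[Y]) ^ 2 / (4 * δ ^ 2) := by
        gcongr; linarith
    _ ≤ 2 * (μ[X] - μ[Y]) ^ 2 / ((b - a) + (d - c)) ^ 2 := by gcongr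

end Hoeffding

theorem theorem4_topK_alpha_general
    {Ω : Type*} [MeasurableSpace Ω] (P : Measure Ω) [IsProbabilityMeasure P]
    (m : ℕ)
    (n₂ K : ℕ) (hK : 1 ≤ K) (hKn₂ : K < n₂)
    (V : Fin m → Type*) [∀ u, Fintype (V u)]
    (hV : ∀ u, Fintype.card (V u) = n₂ - 1)
    (X : Fin m → Ω → ℝ) (Y : ∀ u : Fin m, V u → Ω → ℝ)
    (hXm : ∀ u, Measurable (X u)) (hYm : ∀ u v, Measurable (Y u v))
    (θl θu θbl θbu lam lamb θ θb δ : ℝ)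
    (hXr : ∀ u ω, X u ω ∈ Set.Icc θl θu)
    (hYr : ∀ u v ω, Y u v ω ∈ Set.Icc θbl θbu)
    (hlam : ∀ u, lam = ∫ ω, X u ω ∂P)
    (hlamb : ∀ u v, lamb = ∫ ω, Y u v ω ∂P)
    (hθ : θ = θu - θl) (hθb : θb = θbu - θbl) (hδ : δ = max θ θb)
    (hθpos : 0 < θ) (hθbpos : 0 < θb) :
    (lam < lamb →
      1 - 2 * m * ((n₂ : ℝ) - K) *
          Real.exp (-(lam - lamb) ^ 2 / (4 * δ ^ 2)) ≤
        (P {ω | ∀ u, {v : V u | Y u v ω ≤ X u ω}.ncard ≤ K - 1}).toReal) ∧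
    (lamb < lam →
      1 - 2 * m * ((n₂ : ℝ) - K) *
          Real.exp (-(lam - lamb) ^ 2 / (4 * δ ^ 2)) ≤
        (P {ω | ∀ u, {v : V u | X u ω ≤ Y u v ω}.ncard ≤ K - 1}).toReal) := by
  subst hθ hθb hδ
  have hθδ := le_max_left (θu - θl) (θbu - θbl)
  have hθbδ := le_max_right (θu - θl) (θbu - θbl)
  have hXr' u := Filter.Eventually.of_forall (f := ae P) (hXr u)
  have hYr' u v := Filter.Eventually.of_forall (f := ae P) (hYr u v)
  set e := exp (-(lam - lamb) ^ 2 / (4 * max (θu - θl) (θbu - θbl) ^ 2))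
  have he : e ≤ 2 * e := le_mul_of_one_le_left (exp_pos _).le one_le_two
  have hcount : ((n₂ - 1 - (K - 1) : ℕ) : ℝ) = n₂ - K := by
    rw [show n₂ - 1 - (K - 1) = n₂ - K by omega, Nat.cast_sub hKn₂.le]
  have key := one_sub_card_mul_le_measureReal_forall_ncard_le P hV (K - 1)
  simp only [Fintype.card_fin, hcount] at key
  constructor
  · intro h
    have hpair u v : P.real {ω | Y u v ω ≤ X u ω} ≤ 2 * e := by
      have := measureReal_le_le_exp_of_mem_Icc_of_le (hYm u v).aemeasurable (hXm u).aemeasurable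
        (hYr' u v) (hXr' u) hθbpos hθpos hθbδ hθδ (by rw [← hlam, ← hlamb]; exact h.le)
      rw [← hlam, ← hlamb, sub_sq_comm] at this
      exact this.trans he
    exact le_of_eq_of_le (by ring) (key _ hpair)
  · intro h
    have hpair u v : P.real {ω | X u ω ≤ Y u v ω} ≤ 2 * e := by
      have := measureReal_le_le_exp_of_mem_Icc_of_le (hXm u).aemeasurable (hYm u v).aemeasurable
        (hXr' u) (hYr' u v) hθpos hθbpos hθδ hθbδ (by rw [← hlam, ← hlamb]; exact h.le)
      rw [← hlam, ← hlamb] at this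
      exact this.trans he
    exact le_of_eq_of_le (by ring) (key _ hpair)

/-- Theorem 4(i) (Top-K α-re-identifiability): with `m = α·n₁` overlapping
anonymized users, each with `n₂ - 1` wrong candidates, the event that every
overlapping user's true mapping lies in its Top-K candidate set (i.e. `Δ₁` is
Top-K α-re-identifiable) has probability at least
`1 - 2 m (n₂ - K) exp(-(λ - λ̄)²/(4δ²))`. -/
theorem theorem4_topK_alpha
    {Ω : Type*} [MeasurableSpace Ω] (P : Measure Ω) [IsProbabilityMeasure P]
    (m : ℕ) (hm : 1 ≤ m)
    (n₂ K : ℕ) (hn₂ : 2 ≤ n₂) (hK : 1 ≤ K) (hKn₂ : K < n₂)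
    (V : Fin m → Type*) [∀ u, Fintype (V u)]
    (hV : ∀ u, Fintype.card (V u) = n₂ - 1)
    (X : Fin m → Ω → ℝ) (Y : ∀ u : Fin m, V u → Ω → ℝ)
    (hXm : ∀ u, Measurable (X u)) (hYm : ∀ u v, Measurable (Y u v))
    (θl θu θbl θbu lam lamb θ θb δ : ℝ)
    (hXr : ∀ u ω, X u ω ∈ Set.Icc θl θu)
    (hYr : ∀ u v ω, Y u v ω ∈ Set.Icc θbl θbu)
    (hlam : ∀ u, lam = ∫ ω, X u ω ∂P)
    (hlamb : ∀ u v, lamb = ∫ ω, Y u v ω ∂P)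
    (hθ : θ = θu - θl) (hθb : θb = θbu - θbl) (hδ : δ = max θ θb)
    (hθpos : 0 < θ) (hθbpos : 0 < θb) :
    (lam < lamb →
      1 - 2 * m * ((n₂ : ℝ) - K) *
          Real.exp (-(lam - lamb) ^ 2 / (4 * δ ^ 2)) ≤
        (P {ω | ∀ u, {v : V u | Y u v ω ≤ X u ω}.ncard ≤ K - 1}).toReal) ∧
    (lamb < lam →
      1 - 2 * m * ((n₂ : ℝ) - K) *
          Real.exp (-(lam - lamb) ^ 2 / (4 * δ ^ 2)) ≤
        (P {ω | ∀ u, {v : V u | X u ω ≤ Y u v ω}.ncard ≤ K - 1}).toReal) :=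
  theorem4_topK_alpha_general P m n₂ K hK hKn₂ V hV X Y hXm hYm θl θu θbl θbu lam lamb θ θb δ hXr
    hYr hlam hlamb hθ hθb hδ hθpos hθbpos
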